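/- For all integers p, q, r: if p is even then x_{p,q,r} ▷ b = x_{p+1,−q,−r}, and if p is odd then x_{p,q,r} ▷ b = x_{p−1,−q,−r}. -/

import Mathlib

/-!
Read `x_{p,q,r} ▷ b` inside the permutation group of `Q`, where `S_u = ptSym u`.
`x_{p,q,r}` is obtained from `a` by applying `S_c ^ q` and then `S_d ^ r`, so acting by `b`
multiplies by `S_b * S_d ^ r * S_c ^ q`. The relators force conjugation by `S_b` to invert
both `S_c` and `S_d`:
* `S_d * S_b = S_f⁻¹` and `S_d * S_a = S_e⁻¹` are involutions, so `S_b` and `S_a` invert `S_d`,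
  and hence `S_b * S_a` commutes with `S_d`;
* the relator of `c` gives `S_c = (S_b * S_a) ^ (-k) * S_d⁻¹`, a product of two commuting
  elements that `S_b` both inverts.
Hence `S_b * S_d ^ r * S_c ^ q = S_d ^ (-r) * S_c ^ (-q) * S_b`, and the factor `S_b` changes
the parity of `p` (using `S_b * S_b = 1` when `p` is odd).
-/

/-- A quandle as in the paper: a set with operations `▷` and `▷⁻¹` satisfying
axioms A1, A2, A3. -/
class PaperQuandle (Q : Type*) where
  rhd : Q → Q → Q
  rhdInv : Q → Q → Q
  fix : ∀ x : Q, rhd x x = x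
  inv_rhd : ∀ x y : Q, rhdInv (rhd x y) y = x
  rhd_inv : ∀ x y : Q, rhd (rhdInv x y) y = x
  self_distrib : ∀ x y z : Q, rhd (rhd x y) z = rhd (rhd x z) (rhd y z)

infixl:65 " ▷ " => PaperQuandle.rhd
infixl:65 " ▷⁻¹ " => PaperQuandle.rhdInv

/-- The point symmetry at `u`, as a permutation of `Q`: `x ↦ x ▷ u`,
with inverse `x ↦ x ▷⁻¹ u`. -/
def ptSym {Q : Type*} [PaperQuandle Q] (u : Q) : Equiv.Perm Q where
  toFun x := x ▷ u
  invFun x := x ▷⁻¹ u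
  left_inv x := PaperQuandle.inv_rhd x u
  right_inv x := PaperQuandle.rhd_inv x u

/-- The element `x_{p,q,r} = a^{(ba)^t c^q d^r}` if `p = 2t`, and
`a^{(ba)^t b c^q d^r}` if `p = 2t+1`.  Here the word `ba` (apply `b`, then `a`)
is the permutation `ptSym a * ptSym b`. -/
def X {Q : Type*} [PaperQuandle Q] (a b c d : Q) (p q r : ℤ) : Q :=
  if Even p then
    (ptSym d ^ r) ((ptSym c ^ q) (((ptSym a * ptSym b) ^ (p / 2)) a))
  else
    (ptSym d ^ r) ((ptSym c ^ q) ((((ptSym a * ptSym b) ^ ((p - 1) / 2)) a) ▷ b))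

section Inversion

variable {G : Type*} [Group G] {u v w : G}

theorem conj_eq_inv_of_mul_self_eq_one (hu : u * u = 1) (h : v * u * (v * u) = 1) :
    u * v * u⁻¹ = v⁻¹ := by
  have hu' : u⁻¹ = u := inv_eq_of_mul_eq_one_right hu
  rw [hu']
  refine eq_inv_of_mul_eq_one_left ?_
  calc u * v * u * v = u * (v * u * (v * u)) * u⁻¹ := by group
    _ = 1 := by rw [h]; group

theorem conj_zpow_eq_inv (h : u * v * u⁻¹ = v⁻¹) (j : ℤ) : u * v ^ j * u⁻¹ = (v ^ j)⁻¹ := by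
  rw [← conj_zpow, h, inv_zpow]

theorem conj_mul_eq_inv_of_commute (hvw : Commute v w) (hv : u * v * u⁻¹ = v⁻¹)
    (hw : u * w * u⁻¹ = w⁻¹) : u * (v * w) * u⁻¹ = (v * w)⁻¹ :=
  calc u * (v * w) * u⁻¹ = (u * v * u⁻¹) * (u * w * u⁻¹) := by group
    _ = (w * v)⁻¹ := by rw [hv, hw, mul_inv_rev]
    _ = (v * w)⁻¹ := by rw [hvw.eq]

theorem commute_mul_of_conj_eq_inv (hu : u * v * u⁻¹ = v⁻¹) (hw : w * v * w⁻¹ = v⁻¹) :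
    Commute v (u * w) := by
  have h : u * w * v * (u * w)⁻¹ = v :=
    calc u * w * v * (u * w)⁻¹ = u * (w * v * w⁻¹) * u⁻¹ := by group
      _ = (u * v * u⁻¹)⁻¹ := by rw [hw]; group
      _ = v := by rw [hu, inv_inv]
  exact (mul_inv_eq_iff_eq_mul.mp h).symm

theorem mul_zpow_mul_zpow_of_conj_eq_inv {B C D : G} (hC : B * C * B⁻¹ = C⁻¹)
    (hD : B * D * B⁻¹ = D⁻¹) (q r : ℤ) :
    B * (D ^ r * C ^ q) = D ^ (-r) * C ^ (-q) * B :=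
  calc B * (D ^ r * C ^ q) = (B * D ^ r * B⁻¹) * (B * C ^ q * B⁻¹) * B := by group
    _ = D ^ (-r) * C ^ (-q) * B := by
      rw [conj_zpow_eq_inv hD, conj_zpow_eq_inv hC, zpow_neg, zpow_neg]

end Inversion

section Relators

variable {G : Type*} [Group G] {A B C D E F : G}

theorem conj_eq_inv_of_relator_bdf (hB : B * B = 1) (hF : F * F = 1)
    (hFDB : F * (D * B) = 1) : B * D * B⁻¹ = D⁻¹ := by
  refine conj_eq_inv_of_mul_self_eq_one hB ?_
  rw [eq_inv_of_mul_eq_one_right hFDB, ← mul_inv_rev, hF, inv_one]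

theorem conj_eq_inv_of_relator_dea (hA : A * A = 1) (hE : E * E = 1)
    (hAED : A * (E * D) = 1) : A * D * A⁻¹ = D⁻¹ := by
  have hEDA : E * (D * A) = 1 := by rw [← mul_assoc, mul_eq_one_comm]; exact hAED
  refine conj_eq_inv_of_mul_self_eq_one hA ?_
  rw [eq_inv_of_mul_eq_one_right hEDA, ← mul_inv_rev, hE, inv_one]

theorem conj_eq_inv_of_relator_cke {k : ℤ} (hA : A * A = 1) (hB : B * B = 1)
    (hAED : A * (E * D) = 1) (hAD : A * D * A⁻¹ = D⁻¹) (hBD : B * D * B⁻¹ = D⁻¹)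
    (hCKE : E * (A * ((B * A) ^ k * C)) = 1) : B * C * B⁻¹ = C⁻¹ := by
  have hA' : A⁻¹ = A := inv_eq_of_mul_eq_one_right hA
  have hEA : E * A = D :=
    calc E * A = A⁻¹ * D⁻¹ * A := by
          rw [eq_mul_inv_of_mul_eq (eq_inv_of_mul_eq_one_right hAED)]
      _ = (A⁻¹ * D * A)⁻¹ := by group
      _ = (A * D * A⁻¹)⁻¹ := by rw [hA']
      _ = D := by rw [hAD, inv_inv]
  have hC : C = (B * A) ^ (-k) * D⁻¹ := by
    rw [← mul_assoc, hEA] at hCKE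
    rw [zpow_neg, ← eq_inv_of_mul_eq_one_right hCKE]
    group
  have hBA : B * (B * A) * B⁻¹ = (B * A)⁻¹ := by
    rw [← mul_assoc, hB, one_mul, mul_inv_rev, hA']
  rw [hC]
  refine conj_mul_eq_inv_of_commute ?_ (conj_zpow_eq_inv hBA (-k)) ?_
  · exact ((commute_mul_of_conj_eq_inv hBD hAD).zpow_right (-k)).inv_left.symm
  · simpa using conj_zpow_eq_inv hBD (-1)

end Relators

section Quandle

variable {Q : Type*} [PaperQuandle Q] {a b c d : Q} {p : ℤ}

theorem X_of_even (hp : Even p) (q r : ℤ) :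
    X a b c d p q r = (ptSym d ^ r) ((ptSym c ^ q) (((ptSym a * ptSym b) ^ (p / 2)) a)) :=
  if_pos hp

theorem X_add_one_of_even (hp : Even p) (q r : ℤ) :
    X a b c d (p + 1) q r
      = (ptSym d ^ r) ((ptSym c ^ q) ((((ptSym a * ptSym b) ^ (p / 2)) a) ▷ b)) := by
  rw [X, if_neg (Int.not_even_iff_odd.mpr hp.add_one), add_sub_cancel_right]

end Quandle

theorem stmt_14
    {Q : Type*} [PaperQuandle Q] (k : ℤ) (a b c d e f : Q)
    (rel_a : ∀ x : Q, x ▷ a ▷ a = x)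
    (rel_b : ∀ x : Q, x ▷ b ▷ b = x)
    (rel_e : ∀ x : Q, x ▷ e ▷ e = x)
    (rel_f : ∀ x : Q, x ▷ f ▷ f = x)
    (rel_dea : ∀ x : Q, x ▷ d ▷ e ▷ a = x)
    (rel_bdf : ∀ x : Q, x ▷ b ▷ d ▷ f = x)
    (rel_cke : ∀ x : Q, (((ptSym b * ptSym a) ^ k) (x ▷ c)) ▷ a ▷ e = x) :
    ∀ p q r : ℤ,
      (Even p → X a b c d p q r ▷ b = X a b c d (p + 1) (-q) (-r)) ∧
      (Odd p → X a b c d p q r ▷ b = X a b c d (p - 1) (-q) (-r)) := by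
  intro p q r
  have hA : ptSym a * ptSym a = 1 := Equiv.ext rel_a
  have hB : ptSym b * ptSym b = 1 := Equiv.ext rel_b
  have hE : ptSym e * ptSym e = 1 := Equiv.ext rel_e
  have hF : ptSym f * ptSym f = 1 := Equiv.ext rel_f
  have hAED : ptSym a * (ptSym e * ptSym d) = 1 := Equiv.ext rel_dea
  have hFDB : ptSym f * (ptSym d * ptSym b) = 1 := Equiv.ext rel_bdf
  have hCKE : ptSym e * (ptSym a * ((ptSym b * ptSym a) ^ k * ptSym c)) = 1 := Equiv.ext rel_cke
  have hAD := conj_eq_inv_of_relator_dea hA hE hAED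
  have hBD := conj_eq_inv_of_relator_bdf hB hF hFDB
  have hBC := conj_eq_inv_of_relator_cke hA hB hAED hAD hBD hCKE
  have act_b : ∀ (z : Q) (q r : ℤ),
      (ptSym d ^ r) ((ptSym c ^ q) z) ▷ b = (ptSym d ^ (-r)) ((ptSym c ^ (-q)) (z ▷ b)) :=
    fun z q r => DFunLike.congr_fun (mul_zpow_mul_zpow_of_conj_eq_inv hBC hBD q r) z
  refine ⟨fun hp => ?_, fun hp => ?_⟩
  · rw [X_of_even hp, X_add_one_of_even hp, act_b]
  · have hp' : Even (p - 1) := hp.sub_odd odd_one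
    conv_lhs => rw [← sub_add_cancel p 1]
    rw [X_add_one_of_even hp', X_of_even hp', act_b, rel_b]
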